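/- arXiv:1203.0283 — 2 statements merged into one kernel-verified Lean document; each statement's English description precedes it below -/
import Mathlib

section
/- The functions I₁ = x₃² − x₁x₂, I₂ = x₁(x₂−x₃)²/(x₁−x₂), and I₃ = x₂(x₃−x₁)²/(x₁−x₂) are first integrals of the gDH system ẋ₁ = x₁(x₁−x₂−x₃), ẋ₂ = x₂(x₂−x₁−x₃), ẋ₃ = −x₁x₂ (i.e., their derivatives along solutions vanish wherever x₁ ≠ x₂), and they satisfy I₁ = I₂ − I₃ identically. -/
/-!
The denominator `x₁ - x₂` and the numerators `x₁ (x₂ - x₃)²`, `x₂ (x₃ - x₁)²` are Darboux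
polynomials of the system with the same cofactor `x₁ + x₂ - x₃`, i.e. their derivatives along a
solution are `(x₁ + x₂ - x₃)` times themselves; the cofactors cancel in the quotients. The
polynomial `x₃² - x₁ x₂` is a Darboux polynomial with cofactor `0`. The relation `I₁ = I₂ - I₃`
is the polynomial identity `x₁ (x₂ - x₃)² - x₂ (x₃ - x₁)² = (x₁ - x₂) (x₃² - x₁ x₂)`.
-/

variable {𝕜 : Type*} [NontriviallyNormedField 𝕜]

theorem HasDerivAt.div_eq_zero_of_cofactor {n d : 𝕜 → 𝕜} {k τ : 𝕜}
    (hn : HasDerivAt n (k * n τ) τ) (hd : HasDerivAt d (k * d τ) τ) (hd₀ : d τ ≠ 0) :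
    HasDerivAt (fun s => n s / d s) 0 τ :=
  (hn.div hd hd₀).congr_deriv (by ring)

def IsGDHSolutionAt (x₁ x₂ x₃ : 𝕜 → 𝕜) (τ : 𝕜) : Prop :=
  HasDerivAt x₁ (x₁ τ * (x₁ τ - x₂ τ - x₃ τ)) τ ∧
    HasDerivAt x₂ (x₂ τ * (x₂ τ - x₁ τ - x₃ τ)) τ ∧
    HasDerivAt x₃ (-(x₁ τ * x₂ τ)) τ

namespace IsGDHSolutionAt

variable {x₁ x₂ x₃ : 𝕜 → 𝕜} {τ : 𝕜}

theorem hasDerivAt_sq_sub_mul (h : IsGDHSolutionAt x₁ x₂ x₃ τ) :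
    HasDerivAt (fun s => x₃ s ^ 2 - x₁ s * x₂ s) 0 τ := by
  obtain ⟨h₁, h₂, h₃⟩ := h
  exact ((h₃.fun_pow 2).fun_sub (h₁.fun_mul h₂)).congr_deriv (by ring)

theorem hasDerivAt_sub (h : IsGDHSolutionAt x₁ x₂ x₃ τ) :
    HasDerivAt (fun s => x₁ s - x₂ s) ((x₁ τ + x₂ τ - x₃ τ) * (x₁ τ - x₂ τ)) τ := by
  obtain ⟨h₁, h₂, -⟩ := h
  exact (h₁.fun_sub h₂).congr_deriv (by ring)

theorem hasDerivAt_mul_sub_sq (h : IsGDHSolutionAt x₁ x₂ x₃ τ) :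
    HasDerivAt (fun s => x₁ s * (x₂ s - x₃ s) ^ 2)
      ((x₁ τ + x₂ τ - x₃ τ) * (x₁ τ * (x₂ τ - x₃ τ) ^ 2)) τ := by
  obtain ⟨h₁, h₂, h₃⟩ := h
  exact (h₁.fun_mul ((h₂.fun_sub h₃).fun_pow 2)).congr_deriv (by ring)

theorem hasDerivAt_mul_sub_sq' (h : IsGDHSolutionAt x₁ x₂ x₃ τ) :
    HasDerivAt (fun s => x₂ s * (x₃ s - x₁ s) ^ 2)
      ((x₁ τ + x₂ τ - x₃ τ) * (x₂ τ * (x₃ τ - x₁ τ) ^ 2)) τ := by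
  obtain ⟨h₁, h₂, h₃⟩ := h
  exact (h₂.fun_mul ((h₃.fun_sub h₁).fun_pow 2)).congr_deriv (by ring)

end IsGDHSolutionAt

theorem sq_sub_mul_eq_div_sub_div {u₁ u₂ : 𝕜} (u₃ : 𝕜) (h : u₁ ≠ u₂) :
    u₃ ^ 2 - u₁ * u₂ = u₁ * (u₂ - u₃) ^ 2 / (u₁ - u₂) - u₂ * (u₃ - u₁) ^ 2 / (u₁ - u₂) := by
  have key : u₁ * (u₂ - u₃) ^ 2 - u₂ * (u₃ - u₁) ^ 2 = (u₁ - u₂) * (u₃ ^ 2 - u₁ * u₂) := by ring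
  rw [← sub_div, key, mul_div_cancel_left₀ _ (sub_ne_zero.mpr h)]

/-- `I₁ = x₃²−x₁x₂`, `I₂ = x₁(x₂−x₃)²/(x₁−x₂)`,
`I₃ = x₂(x₃−x₁)²/(x₁−x₂)` are first integrals of `gDH(1,1,0;0,0,0;1)`,
and `I₁ = I₂ − I₃`. -/
theorem stmt_14 (x₁ x₂ x₃ : ℂ → ℂ) (τ : ℂ)
    (h₁ : HasDerivAt x₁ (x₁ τ * (x₁ τ - x₂ τ - x₃ τ)) τ)
    (h₂ : HasDerivAt x₂ (x₂ τ * (x₂ τ - x₁ τ - x₃ τ)) τ)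
    (h₃ : HasDerivAt x₃ (-(x₁ τ * x₂ τ)) τ)
    (hne : x₁ τ ≠ x₂ τ) :
    HasDerivAt (fun s => (x₃ s) ^ 2 - x₁ s * x₂ s) 0 τ ∧
    HasDerivAt (fun s => x₁ s * (x₂ s - x₃ s) ^ 2 / (x₁ s - x₂ s)) 0 τ ∧
    HasDerivAt (fun s => x₂ s * (x₃ s - x₁ s) ^ 2 / (x₁ s - x₂ s)) 0 τ ∧
    (∀ u₁ u₂ u₃ : ℂ, u₁ ≠ u₂ →
      u₃ ^ 2 - u₁ * u₂
        = u₁ * (u₂ - u₃) ^ 2 / (u₁ - u₂) - u₂ * (u₃ - u₁) ^ 2 / (u₁ - u₂)) := by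
  have h : IsGDHSolutionAt x₁ x₂ x₃ τ := ⟨h₁, h₂, h₃⟩
  have hd₀ : x₁ τ - x₂ τ ≠ 0 := sub_ne_zero.mpr hne
  exact ⟨h.hasDerivAt_sq_sub_mul,
    h.hasDerivAt_mul_sub_sq.div_eq_zero_of_cofactor h.hasDerivAt_sub hd₀,
    h.hasDerivAt_mul_sub_sq'.div_eq_zero_of_cofactor h.hasDerivAt_sub hd₀,
    fun _ _ u₃ hu => sq_sub_mul_eq_div_sub_div u₃ hu⟩
end

section
/- The function x(τ) = (1/(2τ), (1−3τ²)/(2τ(1+τ²)), (1+3τ²)/(2τ(1−τ²))) is a solution of the permutation-symmetric system ẋᵢ = xᵢ² − (x₁x₂+x₂x₃+x₃x₁), i = 1,2,3, on any domain avoiding its poles. Moreover P₁P₂P₃ is a first integral of this system, where Pᵢ := 3xᵢ² − x₁x₂ − x₂x₃ − x₃x₁. -/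
/-!
Each `Pᵢ = 3xᵢ² − e₂` (with `e₂ = x₁x₂ + x₂x₃ + x₃x₁`) is a Darboux polynomial of the system:
along solutions `Ṗᵢ = (3xᵢ − (x₁ + x₂ + x₃)) Pᵢ`, and these cofactors sum to zero, so `P₁P₂P₃`
is constant. For the explicit solution, all three components solve the same Riccati equation
`ẋ = x² − 3/(4τ²)`, and their `e₂` equals `3/(4τ²)`.
-/

section FirstIntegral

variable {𝕜 𝔸 : Type*} [NontriviallyNormedField 𝕜] [NormedCommRing 𝔸] [NormedAlgebra 𝕜 𝔸]
  {y₁ y₂ y₃ : 𝕜 → 𝔸} {σ : 𝕜}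

theorem hasDerivAt_symmSum
    (hy₁ : HasDerivAt y₁ (y₁ σ ^ 2 - (y₁ σ * y₂ σ + y₂ σ * y₃ σ + y₃ σ * y₁ σ)) σ)
    (hy₂ : HasDerivAt y₂ (y₂ σ ^ 2 - (y₁ σ * y₂ σ + y₂ σ * y₃ σ + y₃ σ * y₁ σ)) σ)
    (hy₃ : HasDerivAt y₃ (y₃ σ ^ 2 - (y₁ σ * y₂ σ + y₂ σ * y₃ σ + y₃ σ * y₁ σ)) σ) :
    HasDerivAt (fun s => y₁ s * y₂ s + y₂ s * y₃ s + y₃ s * y₁ s)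
      (-((y₁ σ + y₂ σ + y₃ σ) * (y₁ σ * y₂ σ + y₂ σ * y₃ σ + y₃ σ * y₁ σ))
        - 3 * (y₁ σ * y₂ σ * y₃ σ)) σ :=
  (((hy₁.mul hy₂).add (hy₂.mul hy₃)).add (hy₃.mul hy₁)).congr_deriv (by ring)

/-- In use, `t, e, p` are the elementary symmetric functions of the coordinates, so `hroot`
holds by Vieta. -/
theorem hasDerivAt_three_mul_sq_sub {y e : 𝕜 → 𝔸} {t p : 𝔸}
    (hy : HasDerivAt y (y σ ^ 2 - e σ) σ) (he : HasDerivAt e (-(t * e σ) - 3 * p) σ)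
    (hroot : y σ ^ 3 - t * y σ ^ 2 + e σ * y σ - p = 0) :
    HasDerivAt (fun s => 3 * y s ^ 2 - e s) ((3 * y σ - t) * (3 * y σ ^ 2 - e σ)) σ :=
  (((hy.pow 2).const_mul 3).sub he).congr_deriv (by linear_combination (-3) * hroot)

theorem hasDerivAt_prod_three_mul_sq_sub_symmSum
    (hy₁ : HasDerivAt y₁ (y₁ σ ^ 2 - (y₁ σ * y₂ σ + y₂ σ * y₃ σ + y₃ σ * y₁ σ)) σ)
    (hy₂ : HasDerivAt y₂ (y₂ σ ^ 2 - (y₁ σ * y₂ σ + y₂ σ * y₃ σ + y₃ σ * y₁ σ)) σ)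
    (hy₃ : HasDerivAt y₃ (y₃ σ ^ 2 - (y₁ σ * y₂ σ + y₂ σ * y₃ σ + y₃ σ * y₁ σ)) σ) :
    HasDerivAt (fun s =>
        (3 * y₁ s ^ 2 - (y₁ s * y₂ s + y₂ s * y₃ s + y₃ s * y₁ s))
        * (3 * y₂ s ^ 2 - (y₁ s * y₂ s + y₂ s * y₃ s + y₃ s * y₁ s))
        * (3 * y₃ s ^ 2 - (y₁ s * y₂ s + y₂ s * y₃ s + y₃ s * y₁ s))) 0 σ := by
  have he := hasDerivAt_symmSum hy₁ hy₂ hy₃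
  have hP₁ := hasDerivAt_three_mul_sq_sub hy₁ he (by ring)
  have hP₂ := hasDerivAt_three_mul_sq_sub hy₂ he (by ring)
  have hP₃ := hasDerivAt_three_mul_sq_sub hy₃ he (by ring)
  exact ((hP₁.fun_mul hP₂).fun_mul hP₃).congr_deriv (by ring)

end FirstIntegral

section RiccatiSolution

variable {𝕜 : Type*} [NontriviallyNormedField 𝕜] [CharZero 𝕜]

/-- `x = -u'/u` for `u = c s^{3/2} + s^{-1/2}`, which solves `u'' = 3u/(4s²)`. -/
def riccatiSol (c s : 𝕜) : 𝕜 := (1 - 3 * c * s ^ 2) / (2 * s * (1 + c * s ^ 2))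

theorem hasDerivAt_riccatiSol (c : 𝕜) {τ : 𝕜} (hτ : τ ≠ 0) (hc : 1 + c * τ ^ 2 ≠ 0) :
    HasDerivAt (riccatiSol c) (riccatiSol c τ ^ 2 - 3 / (4 * τ ^ 2)) τ := by
  have hnum : HasDerivAt (fun s => 1 - 3 * c * s ^ 2) (-(3 * c * (2 * τ))) τ := by
    simpa using ((hasDerivAt_pow 2 τ).const_mul (3 * c)).const_sub 1
  have hden : HasDerivAt (fun s => 2 * s * (1 + c * s ^ 2))
      (2 * (1 + c * τ ^ 2) + 2 * τ * (c * (2 * τ))) τ := by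
    simpa using ((hasDerivAt_id τ).const_mul 2).fun_mul
      (((hasDerivAt_pow 2 τ).const_mul c).const_add 1)
  have hden₀ : 2 * τ * (1 + c * τ ^ 2) ≠ 0 := mul_ne_zero (mul_ne_zero two_ne_zero hτ) hc
  refine (hnum.fun_div hden hden₀).congr_deriv ?_
  rw [riccatiSol]
  field_simp
  ring

theorem symmSum_riccatiSol {τ : 𝕜} (hτ : τ ≠ 0) (h₁ : 1 + τ ^ 2 ≠ 0) (h₂ : 1 - τ ^ 2 ≠ 0) :
    riccatiSol 0 τ * riccatiSol 1 τ + riccatiSol 1 τ * riccatiSol (-1) τ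
      + riccatiSol (-1) τ * riccatiSol 0 τ = 3 / (4 * τ ^ 2) := by
  simp only [riccatiSol, neg_mul, one_mul, ← sub_eq_add_neg]
  field_simp
  ring

end RiccatiSolution

/-- an explicit rational solution of the permutation-symmetric
system `ẋᵢ = xᵢ² − (x₁x₂+x₂x₃+x₃x₁)`, and the first integral `P₁P₂P₃`. -/
theorem stmt_17 (x₁ x₂ x₃ : ℂ → ℂ)
    (hx₁ : ∀ s, x₁ s = 1 / (2 * s))
    (hx₂ : ∀ s, x₂ s = (1 - 3 * s ^ 2) / (2 * s * (1 + s ^ 2)))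
    (hx₃ : ∀ s, x₃ s = (1 + 3 * s ^ 2) / (2 * s * (1 - s ^ 2)))
    (τ : ℂ) (hτ0 : τ ≠ 0) (h1 : 1 + τ ^ 2 ≠ 0) (h2 : 1 - τ ^ 2 ≠ 0) :
    (HasDerivAt x₁ ((x₁ τ) ^ 2 - (x₁ τ * x₂ τ + x₂ τ * x₃ τ + x₃ τ * x₁ τ)) τ ∧
     HasDerivAt x₂ ((x₂ τ) ^ 2 - (x₁ τ * x₂ τ + x₂ τ * x₃ τ + x₃ τ * x₁ τ)) τ ∧
     HasDerivAt x₃ ((x₃ τ) ^ 2 - (x₁ τ * x₂ τ + x₂ τ * x₃ τ + x₃ τ * x₁ τ)) τ) ∧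
    (∀ (y₁ y₂ y₃ : ℂ → ℂ) (σ : ℂ),
      HasDerivAt y₁ ((y₁ σ) ^ 2 - (y₁ σ * y₂ σ + y₂ σ * y₃ σ + y₃ σ * y₁ σ)) σ →
      HasDerivAt y₂ ((y₂ σ) ^ 2 - (y₁ σ * y₂ σ + y₂ σ * y₃ σ + y₃ σ * y₁ σ)) σ →
      HasDerivAt y₃ ((y₃ σ) ^ 2 - (y₁ σ * y₂ σ + y₂ σ * y₃ σ + y₃ σ * y₁ σ)) σ →
      HasDerivAt (fun s =>
        (3 * (y₁ s) ^ 2 - (y₁ s * y₂ s + y₂ s * y₃ s + y₃ s * y₁ s))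
        * (3 * (y₂ s) ^ 2 - (y₁ s * y₂ s + y₂ s * y₃ s + y₃ s * y₁ s))
        * (3 * (y₃ s) ^ 2 - (y₁ s * y₂ s + y₂ s * y₃ s + y₃ s * y₁ s))) 0 σ) := by
  obtain rfl : x₁ = riccatiSol 0 := funext fun s => by rw [hx₁, riccatiSol]; ring
  obtain rfl : x₂ = riccatiSol 1 := funext fun s => by rw [hx₂, riccatiSol]; ring
  obtain rfl : x₃ = riccatiSol (-1) := funext fun s => by rw [hx₃, riccatiSol]; ring
  rw [symmSum_riccatiSol hτ0 h1 h2]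
  refine ⟨⟨hasDerivAt_riccatiSol 0 hτ0 (by simp), hasDerivAt_riccatiSol 1 hτ0 (by simpa),
    hasDerivAt_riccatiSol (-1) hτ0 (by simpa [← sub_eq_add_neg])⟩,
    fun _ _ _ _ => hasDerivAt_prod_three_mul_sq_sub_symmSum⟩
end
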